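/- Let X be a Haar system space in which the Rademacher sequence (r_n) is not equivalent to the unit vector basis of ℓ_1. Then (r_n) is weakly null in X. -/

import Mathlib

open MeasureTheory Filter Set
open scoped ENNReal

noncomputable section
open Classical

/-- The dyadic interval of level `n` and position `i`. -/
def dyI (n i : ℕ) : Set ℝ := Set.Ico ((i : ℝ) / 2 ^ n) ((i + 1 : ℝ) / 2 ^ n)

/-- The Haar function of the dyadic interval of level `n`, position `i`. -/
def haarFn (n i : ℕ) : ℝ → ℝ := fun x =>
  if x ∈ dyI (n + 1) (2 * i) then 1 else if x ∈ dyI (n + 1) (2 * i + 1) then -1 else 0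

/-- Indexing of `D⁺`: `none` is the "empty" index `∅`, `some (n, i)` a dyadic interval. -/
def haarP : Option (ℕ × ℕ) → ℝ → ℝ
  | none => (Set.Ico (0 : ℝ) 1).indicator 1
  | some (n, i) => haarFn n i

/-- The interval supporting a given index of `D⁺` (with the convention that `∅` is
supported on `[0,1)`). -/
def suppI : Option (ℕ × ℕ) → Set ℝ
  | none => Set.Ico (0 : ℝ) 1
  | some p => dyI p.1 p.2

def lenI : Option (ℕ × ℕ) → ℝ
  | none => 1
  | some (n, _i) => 1 / 2 ^ n

def validIdx : Option (ℕ × ℕ) → Prop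
  | none => True
  | some (n, i) => i < 2 ^ n

/-- The position of the `k`-th member of a branch determined by signs `θ`
(`θ k = true` means the branch turns to the left half at step `k`). -/
def branchPos (θ : ℕ → Bool) : ℕ → ℕ
  | 0 => 0
  | 1 => 0
  | k + 2 => 2 * branchPos θ (k + 1) + (if θ (k + 1) then 0 else 1)

/-- The `k`-th member `I_k` of the branch determined by `θ`, as an index in `D⁺`. -/
def branchI (θ : ℕ → Bool) (k : ℕ) : Option (ℕ × ℕ) :=
  if k = 0 then none else some (k - 1, branchPos θ k)

/-- The sign `θ_k`, with the convention `θ_0 = 1`. -/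
def branchSgn (θ : ℕ → Bool) (k : ℕ) : ℝ :=
  if k = 0 then 1 else if θ k then 1 else -1

/-- The weight `|I_k|⁻¹`, with the convention `|I_0|⁻¹ = |∅|⁻¹ = 1`. -/
def branchWt (k : ℕ) : ℝ := if k = 0 then 1 else 2 ^ (k - 1)

/-- `B_k = I_k \ I_{k+1}`. -/
def branchB (θ : ℕ → Bool) (k : ℕ) : Set ℝ := suppI (branchI θ k) \ suppI (branchI θ (k + 1))


/-- Lebesgue measure restricted to `[0,1)`. -/
def mu01 : Measure ℝ := volume.restrict (Set.Ico 0 1)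

lemma mu01_ne_top (s : Set ℝ) : mu01 s ≠ ⊤ := by
  refine ne_top_of_le_ne_top ?_ (measure_mono (Set.subset_univ s))
  have : mu01 Set.univ = volume (Set.Ico (0:ℝ) 1) := by
    simp [mu01]
  rw [this, Real.volume_Ico]
  exact ENNReal.ofReal_ne_top

/-- indicator of a measurable set, as an element of `L₁[0,1)`. -/
def indL1 (s : Set ℝ) (hs : MeasurableSet s) : Lp ℝ 1 mu01 :=
  indicatorConstLp 1 hs (mu01_ne_top s) (1 : ℝ)

/-- The Haar system as elements of `L₁[0,1)`, indexed by `D⁺`. -/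
def haarL1 : Option (ℕ × ℕ) → Lp ℝ 1 mu01
  | none => indL1 (Set.Ico (0 : ℝ) 1) measurableSet_Ico
  | some (n, i) => indL1 (dyI (n + 1) (2 * i)) measurableSet_Ico
      - indL1 (dyI (n + 1) (2 * i + 1)) measurableSet_Ico

section Tensor

variable {X : Type*} [NormedAddCommGroup X] [NormedSpace ℝ X]

/-- the elementary tensor `f ⊗ x` as an element of the Bochner space `L₁([0,1); X)`. -/
def tensorL1 (f : Lp ℝ 1 mu01) (x : X) : Lp X 1 mu01 :=
  ((L1.integrable_coeFn f).smul_const x).toL1 _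

/-- For an operator `T` on `L₁(X)`, a functional `g ∈ X*` and a vector `x ∈ X`, the operator
`T^{(g,x)} : L₁ → L₁` defined by `⟨e*, T^{(g,x)} e⟩ = ⟨e* ⊗ g, T (e ⊗ x)⟩`; concretely
`T^{(g,x)} e = (s ↦ g ((T (e ⊗ x)) s))`. -/
def entryFun (T : Lp X 1 mu01 →L[ℝ] Lp X 1 mu01) (g : X →L[ℝ] ℝ) (x : X)
    (f : Lp ℝ 1 mu01) : Lp ℝ 1 mu01 :=
  (g.integrable_comp (L1.integrable_coeFn (T (tensorL1 f x)))).toL1 _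

end Tensor

/-- the linear span `Z` of the indicators of dyadic intervals. -/
def dyadicSpan : Submodule ℝ (ℝ → ℝ) :=
  Submodule.span ℝ {f | ∃ n i, i < 2 ^ n ∧ f = (dyI n i).indicator 1}

/-- A Haar system space norm: a norm on the span `Z` of the dyadic indicators which is
invariant under equidistribution and gives `χ_{[0,1)}` norm one.  The corresponding Haar
system space is the completion of `Z` under this norm. -/
structure HaarSystemNorm where
  N : (ℝ → ℝ) → ℝ
  nonneg : ∀ f, 0 ≤ N f
  add_le : ∀ f g, f ∈ dyadicSpan → g ∈ dyadicSpan → N (f + g) ≤ N f + N g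
  smul_eq : ∀ (c : ℝ) f, f ∈ dyadicSpan → N (c • f) = |c| * N f
  eq_zero : ∀ f, f ∈ dyadicSpan → N f = 0 → f = 0
  distrib_inv : ∀ f g, f ∈ dyadicSpan → g ∈ dyadicSpan →
    (∀ t : ℝ, volume {x | t < |f x|} = volume {x | t < |g x|}) → N f = N g
  norm_one : N ((Set.Ico (0 : ℝ) 1).indicator 1) = 1

/-- A realization of the Haar system space determined by a Haar system norm:
a Banach space `X` together with a linear embedding `j` of the span of the dyadic
indicators, which is isometric on the span and has dense range. -/
structure HaarSystemSpace (X : Type*) [NormedAddCommGroup X] [NormedSpace ℝ X] where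
  hn : HaarSystemNorm
  j : (ℝ → ℝ) →ₗ[ℝ] X
  norm_j : ∀ f ∈ dyadicSpan, ‖j f‖ = hn.N f
  dense_j : DenseRange (fun f : dyadicSpan => j f)

/-- the `X`-normalized Haar system `μ_L h_L` in a Haar system space. -/
def HaarSystemSpace.e {X : Type*} [NormedAddCommGroup X] [NormedSpace ℝ X]
    (H : HaarSystemSpace X) (L : Option (ℕ × ℕ)) : X :=
  ‖H.j ((suppI L).indicator 1)‖⁻¹ • H.j (haarP L)

section Factors

variable {X : Type*} [NormedAddCommGroup X] [NormedSpace ℝ X]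

/-- `T` is a `C`-factor of `S` with error `ε`. -/
def IsFactor (C ε : ℝ) (T S : X →L[ℝ] X) : Prop :=
  ∃ A B : X →L[ℝ] X, ‖B.comp (T.comp A) - S‖ ≤ ε ∧ ‖A‖ * ‖B‖ ≤ C

/-- `T` is a `C`-projectional factor of `S` with error `ε`: here `A : X → Y ⊆ X` is the
isomorphism onto a complemented subspace and `B = A⁻¹P` where `P` is the projection,
so that `B ∘ A = Id`. -/
def IsProjFactor (C ε : ℝ) (T S : X →L[ℝ] X) : Prop :=
  ∃ A B : X →L[ℝ] X, B.comp A = ContinuousLinearMap.id ℝ X ∧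
    ‖B.comp (T.comp A) - S‖ ≤ ε ∧ ‖A‖ * ‖B‖ ≤ C

end Factors

/-- the `n`-th Rademacher function `r_n = ∑_{L ∈ D_n} h_L`. -/
def rademacherFn (n : ℕ) : ℝ → ℝ := fun x => ∑ i ∈ Finset.range (2 ^ n), haarFn n i x

/-- Enumeration of the Haar system in the usual linear order `ι`
(`haarEnum 1 = h_∅`, `haarEnum 2 = h_{[0,1)}`, then level by level). -/
def haarEnum : ℕ → ℝ → ℝ := fun m =>
  if m ≤ 1 then (Set.Ico (0 : ℝ) 1).indicator 1
  else haarFn (Nat.log 2 (m - 1)) (m - 2 ^ Nat.log 2 (m - 1) - 1)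

/-- extraction of binary digits: `digitsFn x k` records whether the `k`-th digit of `x`
is `0`, i.e. whether the branch through `x` turns left at step `k`. -/
def digitsFn (x : ℝ) : ℕ → Bool := fun k => decide (⌊x * 2 ^ k⌋ % 2 = 0)

/-- the coin-tossing measure on the space of branches `[D⁺] ≃ {-1,1}^ℕ`, realized as the
image of Lebesgue measure on `[0,1)` under the binary-digit identification. -/
def muBr : Measure (ℕ → Bool) := Measure.map digitsFn mu01

/-- `h_Γ^θ = ∑_{J ∈ Γ} θ_J h_J` for a finite collection `Γ` of dyadic intervals. -/
def hGamma (Γ : Finset (ℕ × ℕ)) (θ : ℕ × ℕ → Bool) : ℝ → ℝ :=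
  fun x => ∑ J ∈ Γ, (if θ J then (1:ℝ) else -1) * haarFn J.1 J.2 x

/-- `Γ* = ∪ {I : I ∈ Γ}`. -/
def GammaStar (Γ : Finset (ℕ × ℕ)) : Set ℝ := ⋃ J ∈ Γ, dyI J.1 J.2

/-- `|Γ*|`, the total length of a disjoint finite collection of dyadic intervals. -/
def lenGamma (Γ : Finset (ℕ × ℕ)) : ℝ := ∑ J ∈ Γ, (1 : ℝ) / 2 ^ J.1


/-! If `φ (r_n) ↛ 0`, then `δ ≤ |φ (r_n)|` along an infinite set of indices `m_0, m_1, …`.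
The Rademacher functions are independent symmetric signs, so `∑ a_j r_j` and
`∑ ±|a_j| r_{m_j}` are equidistributed and hence have the same norm. Choosing the signs of
`φ (r_{m_j})` gives `δ ∑ |a_j| ≤ φ (∑ ±|a_j| r_{m_j}) ≤ M ‖∑ a_j r_j‖`, which together with the
triangle inequality `‖∑ a_j r_j‖ ≤ ∑ |a_j|` makes `(r_n)` equivalent to the `ℓ_1` basis. -/

lemma mem_dyI_iff_floor {N i : ℕ} {x : ℝ} : x ∈ dyI N i ↔ ⌊x * 2 ^ N⌋ = i := by
  have h : (0 : ℝ) < 2 ^ N := by positivity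
  rw [dyI, Set.mem_Ico, div_le_iff₀ h, lt_div_iff₀ h, Int.floor_eq_iff]
  push_cast
  rfl

lemma dyI_subset_dyI_div {M N : ℕ} (h : M ≤ N) (i : ℕ) :
    dyI N i ⊆ dyI M (i / 2 ^ (N - M)) := by
  intro x hx
  rw [mem_dyI_iff_floor] at hx ⊢
  have hx' : x * 2 ^ M = x * 2 ^ N / ((2 ^ (N - M) : ℕ) : ℝ) := by
    rw [← pow_sub_mul_pow 2 h]
    field_simp
    push_cast
    ring
  rw [hx', Int.floor_div_natCast, hx]
  push_cast
  rfl

lemma dyI_zero_zero : dyI 0 0 = Set.Ico 0 1 := by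
  simp [dyI]

lemma dyI_subset_Ico {N i : ℕ} (hi : i < 2 ^ N) : dyI N i ⊆ Set.Ico 0 1 := by
  simpa [Nat.div_eq_of_lt hi, dyI_zero_zero] using dyI_subset_dyI_div (Nat.zero_le N) i

lemma disjoint_dyI {N i i' : ℕ} (h : i ≠ i') : Disjoint (dyI N i) (dyI N i') :=
  Set.disjoint_left.mpr fun x hx hx' => h <| by
    rw [mem_dyI_iff_floor] at hx hx'
    exact_mod_cast hx.symm.trans hx'

lemma exists_mem_dyI {x : ℝ} (hx : x ∈ Set.Ico 0 1) (N : ℕ) :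
    ∃ i < 2 ^ N, x ∈ dyI N i := by
  have h0 : 0 ≤ ⌊x * 2 ^ N⌋ := Int.floor_nonneg.mpr (by have := hx.1; positivity)
  refine ⟨⌊x * 2 ^ N⌋.toNat, ?_, ?_⟩
  · rw [Int.toNat_lt' (by positivity), Int.floor_lt]
    push_cast
    nlinarith [hx.2, (by positivity : (0 : ℝ) < 2 ^ N)]
  · rw [mem_dyI_iff_floor, Int.toNat_of_nonneg h0]

lemma volume_dyI (N i : ℕ) : volume (dyI N i) = ((2 : ℝ≥0∞) ^ N)⁻¹ := by
  rw [dyI, Real.volume_Ico, ← sub_div, add_sub_cancel_left, one_div,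
    ENNReal.ofReal_inv_of_pos (by positivity), ENNReal.ofReal_pow zero_le_two,
    ENNReal.ofReal_ofNat]

lemma indicator_dyI_mem_dyadicSpan {n i : ℕ} (hi : i < 2 ^ n) :
    (dyI n i).indicator 1 ∈ dyadicSpan :=
  Submodule.subset_span ⟨n, i, hi, rfl⟩

lemma indicator_Ico_mem_dyadicSpan : (Set.Ico (0 : ℝ) 1).indicator 1 ∈ dyadicSpan :=
  dyI_zero_zero ▸ indicator_dyI_mem_dyadicSpan (by norm_num)

lemma haarFn_mem_dyadicSpan {n i : ℕ} (hi : i < 2 ^ n) : haarFn n i ∈ dyadicSpan := by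
  have hsub : haarFn n i
      = (dyI (n + 1) (2 * i)).indicator 1 - (dyI (n + 1) (2 * i + 1)).indicator 1 := by
    funext x
    by_cases h1 : x ∈ dyI (n + 1) (2 * i)
    · have h2 : x ∉ dyI (n + 1) (2 * i + 1) :=
        Set.disjoint_left.mp (disjoint_dyI (by omega)) h1
      simp [haarFn, h1, h2]
    · by_cases h2 : x ∈ dyI (n + 1) (2 * i + 1) <;> simp [haarFn, h1, h2]
  have hi' : 2 * i + 1 < 2 ^ (n + 1) := by rw [pow_succ]; omega
  rw [hsub]
  exact Submodule.sub_mem _ (indicator_dyI_mem_dyadicSpan (by omega))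
    (indicator_dyI_mem_dyadicSpan hi')

lemma rademacherFn_mem_dyadicSpan (n : ℕ) : rademacherFn n ∈ dyadicSpan := by
  have h : rademacherFn n = ∑ i ∈ Finset.range (2 ^ n), haarFn n i := by
    funext x
    simp [rademacherFn, Finset.sum_apply]
  rw [h]
  exact Submodule.sum_mem _ fun i hi => haarFn_mem_dyadicSpan (Finset.mem_range.mp hi)

lemma sum_smul_rademacherFn_mem_dyadicSpan {ι : Type*} (s : Finset ι) (a : ι → ℝ) (n : ι → ℕ) :
    ∑ j ∈ s, a j • rademacherFn (n j) ∈ dyadicSpan :=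
  Submodule.sum_mem _ fun j _ => Submodule.smul_mem _ _ (rademacherFn_mem_dyadicSpan (n j))

lemma haarFn_apply_of_mem_dyI {n k : ℕ} {x : ℝ} (hx : x ∈ dyI (n + 1) k) (i : ℕ) :
    haarFn n i x = if k = 2 * i then 1 else if k = 2 * i + 1 then -1 else 0 := by
  have hmem : ∀ j, x ∈ dyI (n + 1) j ↔ k = j := fun j => by
    rw [mem_dyI_iff_floor] at hx ⊢
    rw [hx, Nat.cast_inj]
  simp only [haarFn, hmem]

lemma rademacherFn_eq_of_mem_dyI {n k : ℕ} (hk : k < 2 ^ (n + 1)) {x : ℝ}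
    (hx : x ∈ dyI (n + 1) k) : rademacherFn n x = (-1) ^ k := by
  have hk2 : k / 2 < 2 ^ n := by rw [pow_succ] at hk; omega
  rw [rademacherFn, Finset.sum_eq_single_of_mem (k / 2) (Finset.mem_range.mpr hk2)]
  · rw [haarFn_apply_of_mem_dyI hx]
    obtain ⟨m, rfl | rfl⟩ := Nat.even_or_odd' k
    · simp [pow_mul]
    · rw [if_neg (by omega), if_pos (by omega)]
      simp [pow_succ, pow_mul]
  · intro i _ hi
    rw [haarFn_apply_of_mem_dyI hx]
    split_ifs <;> first | rfl | omega

lemma rademacherFn_eq_zero_of_notMem {n : ℕ} {x : ℝ} (hx : x ∉ Set.Ico 0 1) :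
    rademacherFn n x = 0 := by
  refine Finset.sum_eq_zero fun i hi => ?_
  have hi' : 2 * i + 1 < 2 ^ (n + 1) := by rw [Finset.mem_range] at hi; rw [pow_succ]; omega
  have h1 : x ∉ dyI (n + 1) (2 * i) := fun h => hx (dyI_subset_Ico (by omega) h)
  have h2 : x ∉ dyI (n + 1) (2 * i + 1) := fun h => hx (dyI_subset_Ico hi' h)
  simp [haarFn, h1, h2]

lemma abs_rademacherFn (n : ℕ) (x : ℝ) :
    |rademacherFn n x| = |(Set.Ico (0 : ℝ) 1).indicator 1 x| := by
  by_cases hx : x ∈ Set.Ico (0 : ℝ) 1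
  · obtain ⟨k, hk, hxk⟩ := exists_mem_dyI hx (n + 1)
    simp [rademacherFn_eq_of_mem_dyI hk hxk, hx]
  · simp [rademacherFn_eq_zero_of_notMem hx, hx]

lemma rademacherFn_eq_neg_one_pow_digit {N n : ℕ} (hn : n < N) (g : Fin N → Fin 2) {x : ℝ}
    (hx : x ∈ dyI N (finFunctionFinEquiv g)) :
    rademacherFn n x = (-1) ^ (g ⟨N - (n + 1), by omega⟩ : ℕ) := by
  have hdiv : (finFunctionFinEquiv g : ℕ) / 2 ^ (N - (n + 1)) < 2 ^ (n + 1) := by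
    rw [Nat.div_lt_iff_lt_mul (by positivity), ← pow_add, Nat.add_sub_cancel' hn]
    exact (finFunctionFinEquiv g).isLt
  rw [rademacherFn_eq_of_mem_dyI hdiv (dyI_subset_dyI_div hn _ hx), neg_one_pow_eq_pow_mod_two,
    ← congrFun (finFunctionFinEquiv.symm_apply_apply g) ⟨N - (n + 1), by omega⟩,
    finFunctionFinEquiv_symm_apply_val]

lemma card_filter_comp_injective {ι κ β : Type*} [Fintype ι] [DecidableEq ι] [Fintype κ]
    [DecidableEq κ] [Fintype β] {e : ι → κ} (he : Function.Injective e)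
    (Q : (ι → β) → Prop) [DecidablePred Q] :
    (Finset.univ.filter fun g : κ → β => Q (g ∘ e)).card
      = (Finset.univ.filter Q).card * Fintype.card β ^ (Fintype.card κ - Fintype.card ι) := by
  let E : (κ → β) ≃ (ι → β) × ({k // k ∉ Set.range e} → β) :=
    (Equiv.piEquivPiSubtypeProd (· ∈ Set.range e) _).trans
      ((Equiv.arrowCongr (Equiv.ofInjective e he).symm (Equiv.refl β)).prodCongr (Equiv.refl _))
  have hE : ∀ g, (E g).1 = g ∘ e := fun g => rfl
  rw [Finset.card_equiv E (t := (Finset.univ.filter Q) ×ˢ Finset.univ) (by simp [hE]),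
    Finset.card_product, Finset.card_univ, Fintype.card_fun, Fintype.card_subtype_compl,
    ← Fintype.card_congr (Equiv.ofInjective e he)]

/- On the dyadic intervals of a level `N` beyond every `n j`, each `r_{n j}` reads off one binary
digit of the position, and each sign pattern of these `K` digits occurs on `2 ^ (N - K)` of the
`2 ^ N` intervals. -/
lemma volume_rademacher_pattern {K : ℕ} {n : Fin K → ℕ} (hn : Function.Injective n)
    (P : (Fin K → ℝ) → Prop) :
    volume ({x | P fun j => rademacherFn (n j) x} ∩ Set.Ico 0 1)
      = (Finset.univ.filter fun h : Fin K → Fin 2 => P fun j => (-1) ^ (h j : ℕ)).card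
          * ((2 : ℝ≥0∞) ^ K)⁻¹ := by
  set N := Finset.univ.sup n + 1
  have hnN : ∀ j, n j < N := fun j => Nat.lt_succ_of_le (Finset.le_sup (Finset.mem_univ j))
  set pos : Fin K → Fin N := fun j => ⟨N - (n j + 1), by have := hnN j; omega⟩
  have hpos : Function.Injective pos := fun j j' h => hn <| by
    have := hnN j; have := hnN j'; have := congrArg Fin.val h; simp only [pos] at this; omega
  have hKN : K ≤ N := by simpa using Fintype.card_le_of_injective pos hpos
  set e : (Fin N → Fin 2) ≃ Fin (2 ^ N) := finFunctionFinEquiv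
  set S := Finset.univ.filter fun g : Fin N → Fin 2 => P fun j => (-1) ^ (g (pos j) : ℕ)
  have hval : ∀ g, ∀ x ∈ dyI N (e g),
      (fun j => rademacherFn (n j) x) = fun j => (-1) ^ (g (pos j) : ℕ) :=
    fun g x hx => funext fun j => rademacherFn_eq_neg_one_pow_digit (hnN j) g hx
  have hset : {x | P fun j => rademacherFn (n j) x} ∩ Set.Ico 0 1 = ⋃ g ∈ S, dyI N (e g) := by
    ext x
    simp only [Set.mem_inter_iff, Set.mem_ofPred_eq, Set.mem_iUnion, S, Finset.mem_filter,
      Finset.mem_univ, true_and, exists_prop]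
    constructor
    · rintro ⟨hP, hx⟩
      obtain ⟨i, hi, hxi⟩ := exists_mem_dyI hx N
      have hxg : x ∈ dyI N (e (e.symm ⟨i, hi⟩)) := by rwa [e.apply_symm_apply]
      exact ⟨e.symm ⟨i, hi⟩, hval _ x hxg ▸ hP, hxg⟩
    · rintro ⟨g, hP, hxg⟩
      exact ⟨(hval g x hxg).symm ▸ hP, dyI_subset_Ico (e g).isLt hxg⟩
  have hdisj : Set.PairwiseDisjoint (S : Set (Fin N → Fin 2)) fun g => dyI N (e g) :=
    fun g _ g' _ hne => disjoint_dyI fun h => hne (e.injective (Fin.val_injective h))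
  have hcard : S.card = (Finset.univ.filter fun h : Fin K → Fin 2 =>
      P fun j => (-1) ^ (h j : ℕ)).card * 2 ^ (N - K) := by
    simpa using card_filter_comp_injective hpos fun h : Fin K → Fin 2 =>
      P fun j => (-1) ^ (h j : ℕ)
  rw [hset, measure_biUnion_finset hdisj fun g _ => measurableSet_Ico]
  simp only [volume_dyI, Finset.sum_const, nsmul_eq_mul, hcard, Nat.cast_mul, Nat.cast_pow,
    Nat.cast_ofNat]
  rw [← pow_sub_mul_pow 2 hKN, ENNReal.mul_inv (by simp) (by simp), mul_assoc,
    ← mul_assoc (2 ^ (N - K)), ENNReal.mul_inv_cancel (by simp) (by simp), one_mul]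

lemma neg_one_pow_val_add {R : Type*} [Ring R] (u v : Fin 2) :
    (-1 : R) ^ ((u + v : Fin 2) : ℕ) = (-1) ^ (u : ℕ) * (-1) ^ (v : ℕ) := by
  rw [Fin.val_add, ← pow_add, ← neg_one_pow_eq_pow_mod_two]

lemma exists_eq_neg_one_pow_mul_of_abs_eq {a b : ℝ} (h : |a| = |b|) :
    ∃ e : Fin 2, b = (-1) ^ (e : ℕ) * a := by
  rcases abs_eq_abs.mp h with rfl | rfl
  · exact ⟨0, by simp⟩
  · exact ⟨1, by simp⟩

lemma card_filter_mul_neg_one_pow_congr {K : ℕ} {a a' : Fin K → ℝ} (ha : ∀ j, |a j| = |a' j|)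
    (Q : (Fin K → ℝ) → Prop) :
    (Finset.univ.filter fun h : Fin K → Fin 2 => Q fun j => a j * (-1) ^ (h j : ℕ)).card
      = (Finset.univ.filter fun h : Fin K → Fin 2 => Q fun j => a' j * (-1) ^ (h j : ℕ)).card := by
  choose ε hε using fun j => exists_eq_neg_one_pow_mul_of_abs_eq (ha j)
  refine Finset.card_equiv (Equiv.addRight ε) fun h => ?_
  have hflip : (fun j => a' j * (-1) ^ ((h + ε) j : ℕ)) = fun j => a j * (-1) ^ (h j : ℕ) := by
    funext j
    rw [Pi.add_apply, neg_one_pow_val_add, hε j]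
    rcases neg_one_pow_eq_or ℝ (ε j : ℕ) with h1 | h1 <;> rw [h1] <;> ring
  simp only [Finset.mem_filter, Finset.mem_univ, true_and, Equiv.coe_addRight, hflip]

lemma volume_lt_abs_sum_rademacher_congr {K : ℕ} {a a' : Fin K → ℝ} (ha : ∀ j, |a j| = |a' j|)
    {n n' : Fin K → ℕ} (hn : Function.Injective n) (hn' : Function.Injective n') (t : ℝ) :
    volume {x | t < |(∑ j, a j • rademacherFn (n j)) x|}
      = volume {x | t < |(∑ j, a' j • rademacherFn (n' j)) x|} := by
  rcases lt_or_ge t 0 with ht | ht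
  · have huniv : ∀ f : ℝ → ℝ, {x | t < |f x|} = Set.univ :=
      fun f => Set.eq_univ_of_forall fun x => ht.trans_le (abs_nonneg _)
    rw [huniv, huniv]
  · have hlevel : ∀ (b : Fin K → ℝ) (m : Fin K → ℕ), {x | t < |(∑ j, b j • rademacherFn (m j)) x|}
        = {x | (fun v : Fin K → ℝ => t < |∑ j, b j * v j|) fun j => rademacherFn (m j) x}
          ∩ Set.Ico 0 1 := by
      intro b m
      ext x
      simp only [Set.mem_inter_iff, Set.mem_ofPred_eq, Finset.sum_apply, Pi.smul_apply,
        smul_eq_mul, iff_self_and]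
      intro hx
      by_contra hx01
      simp [rademacherFn_eq_zero_of_notMem hx01] at hx
      linarith
    rw [hlevel, hlevel, volume_rademacher_pattern hn fun v => t < |∑ j, a j * v j|,
      volume_rademacher_pattern hn' fun v => t < |∑ j, a' j * v j|]
    congr 2
    exact_mod_cast card_filter_mul_neg_one_pow_congr ha fun v => t < |∑ j, v j|

lemma exists_pos_infinite_setOf_le_abs {u : ℕ → ℝ} (h : ¬Tendsto u atTop (nhds 0)) :
    ∃ δ > 0, {n | δ ≤ |u n|}.Infinite := by
  simp only [Metric.tendsto_nhds, Real.dist_eq, sub_zero, not_forall, not_eventually,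
    not_lt] at h
  obtain ⟨δ, hδ, hfreq⟩ := h
  exact ⟨δ, hδ, Nat.frequently_atTop_iff_infinite.mp hfreq⟩

namespace HaarSystemNorm

variable (H : HaarSystemNorm)

lemma N_sum_le {ι : Type*} (s : Finset ι) {f : ι → ℝ → ℝ} (hf : ∀ i ∈ s, f i ∈ dyadicSpan) :
    H.N (∑ i ∈ s, f i) ≤ ∑ i ∈ s, H.N (f i) := by
  induction s using Finset.cons_induction with
  | empty => simpa using (H.smul_eq 0 0 (Submodule.zero_mem _)).le
  | cons i s his ih =>
    rw [Finset.sum_cons, Finset.sum_cons]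
    have hs : ∀ j ∈ s, f j ∈ dyadicSpan := fun j hj => hf j (Finset.mem_cons_of_mem hj)
    exact (H.add_le _ _ (hf i (Finset.mem_cons_self i s)) (Submodule.sum_mem _ hs)).trans
      (add_le_add le_rfl (ih hs))

lemma N_rademacherFn (n : ℕ) : H.N (rademacherFn n) = 1 := by
  rw [← H.norm_one]
  refine H.distrib_inv _ _ (rademacherFn_mem_dyadicSpan n) indicator_Ico_mem_dyadicSpan fun t => ?_
  simp only [abs_rademacherFn]

lemma N_sum_smul_rademacherFn_le (a : ℕ → ℝ) (K : ℕ) :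
    H.N (∑ n ∈ Finset.range K, a n • rademacherFn n) ≤ ∑ n ∈ Finset.range K, |a n| := by
  refine (H.N_sum_le _ fun n _ => Submodule.smul_mem _ _ (rademacherFn_mem_dyadicSpan n)).trans
    (Finset.sum_le_sum fun n _ => ?_)
  rw [H.smul_eq _ _ (rademacherFn_mem_dyadicSpan n), N_rademacherFn, mul_one]

lemma N_sum_smul_rademacherFn_congr {K : ℕ} {a a' : Fin K → ℝ} (ha : ∀ j, |a j| = |a' j|)
    {n n' : Fin K → ℕ} (hn : Function.Injective n) (hn' : Function.Injective n') :
    H.N (∑ j, a j • rademacherFn (n j)) = H.N (∑ j, a' j • rademacherFn (n' j)) :=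
  H.distrib_inv _ _ (sum_smul_rademacherFn_mem_dyadicSpan _ _ _)
    (sum_smul_rademacherFn_mem_dyadicSpan _ _ _) (volume_lt_abs_sum_rademacher_congr ha hn hn')

lemma mul_sum_abs_le_of_infinite {φ : (ℝ → ℝ) →ₗ[ℝ] ℝ} {M : ℝ}
    (hφ : ∀ f ∈ dyadicSpan, |φ f| ≤ M * H.N f) {δ : ℝ}
    (hS : {n | δ ≤ |φ (rademacherFn n)|}.Infinite) (a : ℕ → ℝ) (K : ℕ) :
    δ * ∑ n ∈ Finset.range K, |a n| ≤ M * H.N (∑ n ∈ Finset.range K, a n • rademacherFn n) := by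
  set m : Fin K → ℕ := fun j => hS.natEmbedding _ j
  have hm : Function.Injective m := fun j j' h =>
    Fin.val_injective ((hS.natEmbedding _).injective (Subtype.ext h))
  set b : Fin K → ℝ := fun j => if 0 ≤ φ (rademacherFn (m j)) then |a j| else -|a j|
  have hb : ∀ j, |b j| = |a j| := fun j => by unfold b; split_ifs <;> simp
  have hbφ : ∀ j, b j * φ (rademacherFn (m j)) = |a j| * |φ (rademacherFn (m j))| := fun j => by
    unfold b; split_ifs with h
    · rw [abs_of_nonneg h]
    · rw [abs_of_neg (not_le.mp h)]; ring
  calc δ * ∑ n ∈ Finset.range K, |a n| = ∑ j : Fin K, |a j| * δ := by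
        rw [Finset.mul_sum, ← Fin.sum_univ_eq_sum_range]; simp only [mul_comm]
    _ ≤ ∑ j : Fin K, |a j| * |φ (rademacherFn (m j))| := Finset.sum_le_sum fun j _ =>
        mul_le_mul_of_nonneg_left (hS.natEmbedding _ j).2 (abs_nonneg _)
    _ = φ (∑ j, b j • rademacherFn (m j)) := by simp [map_sum, hbφ]
    _ ≤ M * H.N (∑ j, b j • rademacherFn (m j)) :=
        (le_abs_self _).trans (hφ _ (sum_smul_rademacherFn_mem_dyadicSpan _ _ _))
    _ = M * H.N (∑ n ∈ Finset.range K, a n • rademacherFn n) := by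
        rw [H.N_sum_smul_rademacherFn_congr hb hm Fin.val_injective,
          Fin.sum_univ_eq_sum_range fun n => a n • rademacherFn n]

end HaarSystemNorm

theorem statement14 (H : HaarSystemNorm)
    (hnot : ¬ ∃ c > (0 : ℝ), ∃ C : ℝ, ∀ (a : ℕ → ℝ) (K : ℕ),
      c * ∑ n ∈ Finset.range K, |a n| ≤
          H.N (∑ n ∈ Finset.range K, a n • rademacherFn n) ∧
        H.N (∑ n ∈ Finset.range K, a n • rademacherFn n) ≤
          C * ∑ n ∈ Finset.range K, |a n|)
    (φ : (ℝ → ℝ) →ₗ[ℝ] ℝ) (M : ℝ) (hφ : ∀ f ∈ dyadicSpan, |φ f| ≤ M * H.N f) :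
    Tendsto (fun n => φ (rademacherFn n)) atTop (nhds 0) := by
  have hM : 0 ≤ M := by
    simpa [H.norm_one] using (abs_nonneg _).trans (hφ _ indicator_Ico_mem_dyadicSpan)
  by_contra hlim
  obtain ⟨δ, hδ, hS⟩ := exists_pos_infinite_setOf_le_abs hlim
  refine hnot ⟨δ / (M + 1), by positivity, 1, fun a K => ⟨?_, ?_⟩⟩
  · have hlower := H.mul_sum_abs_le_of_infinite hφ hS a K
    have hN := H.nonneg (∑ n ∈ Finset.range K, a n • rademacherFn n)
    rw [div_mul_eq_mul_div, div_le_iff₀ (by positivity)]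
    nlinarith
  · rw [one_mul]
    exact H.N_sum_smul_rademacherFn_le a K
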